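/- arXiv:2307.07237 — 5 statements merged into one kernel-verified Lean document; each statement's English description precedes it below -/
import Mathlib

section
/- Let Z = {z_1 < z_2 < ... < z_m} be a finite set of integers with consecutive gaps z_{i+1} − z_i ≤ K for some K > 0. Then Z contains an arithmetic progression of length w(K, ⌊m/K⌋), where w(s, N) is the largest L such that every s-coloring of {1,...,N} contains a monochromatic arithmetic progression of length L. -/
/-!
Cut the integers from `z 1` onwards into consecutive blocks of length `K`. Since the gaps are at
most `K` and `z m - z 1 ≥ m - 1`, each of the first `⌊m/K⌋` blocks contains an element of `Z`.
Colour block `x` by the offset in `{0, …, K-1}` of such an element inside the block. A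
monochromatic progression of blocks `a, a + d, …` of colour `r` then yields the progression
`z 1 + (a - 1) K + r + j (d K)` inside `Z`.
-/

/-- Every `s`-coloring of `{1,...,N}` admits a monochromatic arithmetic
progression of length `L`. -/
def hasMonoAP (s N L : ℕ) : Prop :=
  ∀ c : ℕ → Fin s, ∃ a d : ℕ, 1 ≤ d ∧
    (∀ j < L, a + j * d ∈ Finset.Icc 1 N) ∧ (∀ j < L, c (a + j * d) = c a)

/-- The inverse van der Waerden function `w(s, N)`: the largest `L` such that
every `s`-coloring of `{1,...,N}` has a monochromatic AP of length `L`. -/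
noncomputable def invVdW (s N : ℕ) : ℕ := sSup {L | hasMonoAP s N L}

theorem hasMonoAP_zero (s N : ℕ) : hasMonoAP s N 0 :=
  fun _ => ⟨0, 1, le_rfl, fun _ h => absurd h (Nat.not_lt_zero _),
    fun _ h => absurd h (Nat.not_lt_zero _)⟩

theorem hasMonoAP.le {s N L : ℕ} (hs : 0 < s) (h : hasMonoAP s N L) : L ≤ N := by
  obtain ⟨a, d, hd, hmem, -⟩ := h fun _ => ⟨0, hs⟩
  rcases Nat.eq_zero_or_pos L with rfl | hL
  · exact Nat.zero_le N
  have hfirst := Finset.mem_Icc.1 (hmem 0 hL)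
  have hlast := Finset.mem_Icc.1 (hmem (L - 1) (by omega))
  have : L - 1 ≤ (L - 1) * d := Nat.le_mul_of_pos_right _ hd
  omega

theorem hasMonoAP_invVdW {s : ℕ} (hs : 0 < s) (N : ℕ) : hasMonoAP s N (invVdW s N) :=
  Nat.sSup_mem ⟨0, hasMonoAP_zero s N⟩ ⟨N, fun _ h => hasMonoAP.le hs h⟩

theorem exists_AP_of_forall_block_inter {S : Set ℤ} {K N L : ℕ} (hK : 0 < K)
    (hL : hasMonoAP K N L) (b : ℤ)
    (hS : ∀ x ∈ Finset.Icc 1 N, ∃ r : Fin K, b + x * K + r ∈ S) :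
    ∃ a d : ℤ, 1 ≤ d ∧ ∀ j < L, a + j * d ∈ S := by
  have hS' : ∀ x, ∃ r : Fin K, x ∈ Finset.Icc 1 N → b + x * K + r ∈ S := fun x => by
    by_cases hx : x ∈ Finset.Icc 1 N
    · exact (hS x hx).imp fun _ h _ => h
    · exact ⟨⟨0, hK⟩, fun h => absurd h hx⟩
  choose c hc using hS'
  obtain ⟨a, d, hd, hmem, hcol⟩ := hL c
  refine ⟨b + a * K + c a, d * K, by exact_mod_cast Nat.mul_pos hd hK, fun j hj => ?_⟩
  convert hc _ (hmem j hj) using 1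
  rw [hcol j hj]
  push_cast
  ring

section GapSequence

variable {z : ℕ → ℤ} {m : ℕ}

theorem exists_near_of_gap_le {K p : ℤ} (hK : 0 < K) (hm : 1 ≤ m)
    (hgap : ∀ i, 1 ≤ i → i < m → z (i + 1) - z i ≤ K) (hfirst : z 1 ≤ p) (hlast : p ≤ z m) :
    ∃ i, 1 ≤ i ∧ i ≤ m ∧ p ≤ z i ∧ z i < p + K := by
  induction m with
  | zero => omega
  | succ n ih =>
    rcases Nat.eq_zero_or_pos n with rfl | hn
    · exact ⟨1, le_rfl, le_rfl, hlast, by omega⟩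
    by_cases hp : p ≤ z n
    · obtain ⟨i, hi1, hin, hpi, hip⟩ := ih hn (fun i h1 h2 => hgap i h1 (by omega)) hp
      exact ⟨i, hi1, by omega, hpi, hip⟩
    · have := hgap n hn (by omega)
      exact ⟨n + 1, by omega, le_rfl, hlast, by omega⟩

theorem sub_one_le_sub_of_strictMono (hm : 1 ≤ m)
    (hmono : ∀ i, 1 ≤ i → i < m → z i < z (i + 1)) : (m : ℤ) - 1 ≤ z m - z 1 := by
  induction m, hm using Nat.le_induction with
  | base => simp
  | succ n hn ih =>
    have := hmono n hn (by omega)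
    have := ih fun i h1 h2 => hmono i h1 (by omega)
    push_cast
    omega

theorem exists_mem_block {K : ℕ} (hK : 0 < K)
    (hmono : ∀ i, 1 ≤ i → i < m → z i < z (i + 1))
    (hgap : ∀ i, 1 ≤ i → i < m → z (i + 1) - z i ≤ (K : ℤ))
    {x : ℕ} (hx : x ∈ Finset.Icc 1 (m / K)) :
    ∃ r : Fin K, ∃ i, 1 ≤ i ∧ i ≤ m ∧ z i = z 1 - K + x * K + r := by
  obtain ⟨hx1, hxN⟩ := Finset.mem_Icc.1 hx
  have hxm : x * K ≤ m := (Nat.mul_le_mul_right K hxN).trans (Nat.div_mul_le_self m K)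
  have hKx : K ≤ x * K := Nat.le_mul_of_pos_left K hx1
  have hspan := sub_one_le_sub_of_strictMono (by omega) hmono
  obtain ⟨i, hi1, him, hpi, hip⟩ := exists_near_of_gap_le (p := z 1 - K + (x * K : ℕ))
    (by exact_mod_cast hK) (by omega) hgap (by omega) (by omega)
  refine ⟨⟨(z i - (z 1 - K + x * K)).toNat, by omega⟩, i, hi1, him, ?_⟩
  push_cast at hpi hip ⊢
  omega

end GapSequence

/-- a finite increasing sequence of integers with gaps `≤ K`
contains an arithmetic progression of length `w(K, ⌊m/K⌋)`. -/
theorem bounded_gaps_contains_AP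
    (m K : ℕ) (hK : 0 < K) (z : ℕ → ℤ)
    (hmono : ∀ i, 1 ≤ i → i < m → z i < z (i + 1))
    (hgap : ∀ i, 1 ≤ i → i < m → z (i + 1) - z i ≤ (K : ℤ)) :
    ∃ a d : ℤ, 1 ≤ d ∧
      ∀ j < invVdW K (m / K), ∃ i, 1 ≤ i ∧ i ≤ m ∧ z i = a + (j : ℤ) * d :=
  exists_AP_of_forall_block_inter (S := {y | ∃ i, 1 ≤ i ∧ i ≤ m ∧ z i = y}) hK
    (hasMonoAP_invVdW hK (m / K)) (z 1 - K) fun _ hx => exists_mem_block hK hmono hgap hx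
end

section
/- Let 1 < α < 2 be a real number whose binary expansion has infinitely many nonzero digits, and let C₂ = FS({⌊2^n α⌋}_{n=0}^∞) be the set of finite subset sums. Then C₂ + C₂ = ℕ, i.e., every nonnegative integer is a sum of two elements of C₂. -/
/-!
Write `b k = ⌊2^k α⌋₊`. Since `⌊2x⌋₊ / 2 = ⌊x⌋₊`, we have `2 b k ≤ b (k+1) ≤ 2 b k + 1`, and
`b 0 = 1`, so `b k ≥ 2^k`. If `b k ≤ n < b (k+1)` then `n - b k ≤ b k`: either `n = b k + b k`, or by induction
`n - b k` is a sum of two subset sums of `b 0, …, b (k-1)`, and `b k` is added to one of them.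
-/

/-- The set of finite subset sums of a sequence `X` (0 included as the empty sum). -/
def FS (X : ℕ → ℕ) : Set ℕ := {m | ∃ I : Finset ℕ, m = ∑ i ∈ I, X i}

open Finset

theorem Nat.floor_two_mul_div_two {K : Type*} [Semifield K] [LinearOrder K] [IsStrictOrderedRing K]
    [FloorSemiring K] (x : K) : ⌊2 * x⌋₊ / 2 = ⌊x⌋₊ := by
  rw [← Nat.floor_div_ofNat, mul_div_cancel_left₀ x two_ne_zero]

section SubsetSums

variable (b : ℕ → ℕ)

theorem exists_subset_range_sum_add_sum_of_lt (hb0 : b 0 ≤ 1)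
    (hb : ∀ k, b (k + 1) ≤ 2 * b k + 1) :
    ∀ k, ∀ n < b k, ∃ I ⊆ range k, ∃ J ⊆ range k, n = ∑ i ∈ I, b i + ∑ j ∈ J, b j := by
  intro k
  induction k with
  | zero =>
    intro n hn
    exact ⟨∅, empty_subset _, ∅, empty_subset _, by simp; omega⟩
  | succ k ih =>
    intro n hn
    have hrange : range k ⊆ range (k + 1) := range_subset_range.2 k.le_succ
    by_cases hnk : n < b k
    · obtain ⟨I, hI, J, hJ, rfl⟩ := ih n hnk
      exact ⟨I, hI.trans hrange, J, hJ.trans hrange, rfl⟩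
    obtain ⟨m, rfl⟩ : ∃ m, n = b k + m := ⟨n - b k, by omega⟩
    have := hb k
    rcases (show m ≤ b k by omega).lt_or_eq with hm | rfl
    · obtain ⟨I, hI, J, hJ, rfl⟩ := ih m hm
      have hkI : k ∉ I := fun hk => by simpa using hI hk
      refine ⟨insert k I, ?_, J, hJ.trans hrange, ?_⟩
      · exact insert_subset (self_mem_range_succ k) (hI.trans hrange)
      · rw [sum_insert hkI, add_assoc]
    · exact ⟨{k}, by simp, {k}, by simp, by simp⟩

theorem exists_mem_FS_add_eq (hb0 : b 0 ≤ 1) (hb : ∀ k, b (k + 1) ≤ 2 * b k + 1)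
    (hunbounded : ∀ n, ∃ k, n < b k) (n : ℕ) : ∃ x ∈ FS b, ∃ y ∈ FS b, n = x + y := by
  obtain ⟨k, hk⟩ := hunbounded n
  obtain ⟨I, -, J, -, hIJ⟩ := exists_subset_range_sum_add_sum_of_lt b hb0 hb k n hk
  exact ⟨_, ⟨I, rfl⟩, _, ⟨J, rfl⟩, hIJ⟩

end SubsetSums

theorem C2_add_C2_eq_N_general
    (α : ℝ) (hα1 : 1 < α) (hα2 : α < 2) :
    ∀ n : ℕ, ∃ x ∈ FS (fun k => ⌊2 ^ k * α⌋₊), ∃ y ∈ FS (fun k => ⌊2 ^ k * α⌋₊),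
      n = x + y := by
  refine exists_mem_FS_add_eq _ ?_ ?_ ?_
  · have : ⌊α⌋₊ < 2 := (Nat.floor_lt (by linarith)).2 (by norm_num [hα2])
    simpa using Nat.le_of_lt_succ this
  · intro k
    have := Nat.floor_two_mul_div_two (2 ^ k * α)
    rw [← mul_assoc, ← pow_succ'] at this
    omega
  · intro n
    refine ⟨n, n.lt_two_pow_self.trans_le (Nat.le_floor ?_)⟩
    push_cast
    nlinarith [pow_pos (two_pos : (0 : ℝ) < 2) n]

/-- for `C₂ = FS({⌊2^n α⌋})` with `1 < α < 2` having infinitely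
many nonzero binary digits, `C₂ + C₂ = ℕ`. -/
theorem C2_add_C2_eq_N
    (α : ℝ) (hα1 : 1 < α) (hα2 : α < 2)
    (ε : ℕ → ℕ) (hε : ∀ i, ε i ≤ 1) (hε0 : ε 0 = 1)
    (hsum : α = ∑' i, (ε i : ℝ) / 2 ^ i)
    (hinf : ∀ N : ℕ, ∃ i, N < i ∧ ε i ≠ 0) :
    ∀ n : ℕ, ∃ x ∈ FS (fun k => ⌊2 ^ k * α⌋₊), ∃ y ∈ FS (fun k => ⌊2 ^ k * α⌋₊),
      n = x + y :=
  C2_add_C2_eq_N_general α hα1 hα2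
end

section
/- Let 1 < α < 2 with binary expansion having infinitely many nonzero digits, a_n = ⌊2^n α⌋, s_n = Σ_{i=0}^n a_i, and C₂ = FS({a_n}). Then for every n ≥ 0, the integer interval [0, s_n] is contained in C₂ + C₂. -/
open Finset

theorem Nat.floor_two_mul_le {R : Type*} [CommRing R] [LinearOrder R] [IsStrictOrderedRing R]
    [FloorSemiring R] (x : R) : ⌊2 * x⌋₊ ≤ 2 * ⌊x⌋₊ + 1 := by
  rcases lt_or_ge x 0 with hx | hx
  · simp [Nat.floor_of_nonpos (by linarith : 2 * x ≤ 0)]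
  · have hlt : ⌊2 * x⌋₊ < 2 * ⌊x⌋₊ + 2 := by
      rw [Nat.floor_lt (by positivity)]
      push_cast
      linarith [Nat.lt_floor_add_one x]
    omega

theorem exists_subset_sum_add_subset_sum {a : ℕ → ℕ}
    (ha : ∀ n, a n ≤ 2 * ∑ i ∈ range n, a i + 1) (n : ℕ) {k : ℕ}
    (hk : k ≤ 2 * ∑ i ∈ range n, a i) :
    ∃ I ⊆ range n, ∃ J ⊆ range n, k = ∑ i ∈ I, a i + ∑ i ∈ J, a i := by
  induction n generalizing k with
  | zero => exact ⟨∅, empty_subset _, ∅, empty_subset _, by simpa using hk⟩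
  | succ n ih =>
    rw [sum_range_succ] at hk
    have hn := ha n
    have lift {I : Finset ℕ} (hI : I ⊆ range n) : I ⊆ range (n + 1) :=
      hI.trans (range_subset_range.2 n.le_succ)
    have insert_sum {I : Finset ℕ} (hI : I ⊆ range n) :
        insert n I ⊆ range (n + 1) ∧ ∑ i ∈ insert n I, a i = a n + ∑ i ∈ I, a i :=
      ⟨insert_subset (self_mem_range_succ n) (lift hI), sum_insert fun h => notMem_range_self (hI h)⟩
    rcases le_or_gt k (2 * ∑ i ∈ range n, a i) with h0 | h0
    · obtain ⟨I, hI, J, hJ, rfl⟩ := ih h0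
      exact ⟨I, lift hI, J, lift hJ, rfl⟩
    rcases le_or_gt (k - a n) (2 * ∑ i ∈ range n, a i) with h1 | h1
    · obtain ⟨I, hI, J, hJ, hIJ⟩ := ih h1
      obtain ⟨hI', hsum⟩ := insert_sum hI
      exact ⟨insert n I, hI', J, lift hJ, by omega⟩
    · obtain ⟨I, hI, J, hJ, hIJ⟩ := ih (k := k - 2 * a n) (by omega)
      obtain ⟨hI', hsumI⟩ := insert_sum hI
      obtain ⟨hJ', hsumJ⟩ := insert_sum hJ
      exact ⟨insert n I, hI', insert n J, hJ', by omega⟩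

theorem floor_two_pow_mul_le_two_mul_sum_add_one {α : ℝ} (hα : α < 2) (n : ℕ) :
    ⌊(2 : ℝ) ^ n * α⌋₊ ≤ 2 * ∑ i ∈ range n, ⌊(2 : ℝ) ^ i * α⌋₊ + 1 := by
  cases n with
  | zero => simpa [Nat.lt_succ_iff] using (Nat.floor_lt' two_ne_zero).2 (by simpa using hα)
  | succ n =>
    calc ⌊(2 : ℝ) ^ (n + 1) * α⌋₊ ≤ 2 * ⌊(2 : ℝ) ^ n * α⌋₊ + 1 := by
          rw [pow_succ, mul_comm _ (2 : ℝ), mul_assoc]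
          exact Nat.floor_two_mul_le _
      _ ≤ 2 * ∑ i ∈ range (n + 1), ⌊(2 : ℝ) ^ i * α⌋₊ + 1 := by
          gcongr
          exact single_le_sum (f := fun i => ⌊(2 : ℝ) ^ i * α⌋₊) (fun _ _ => Nat.zero_le _)
            (self_mem_range_succ n)

theorem interval_subset_C2_add_C2_general
    (α : ℝ) (hα2 : α < 2) :
    ∀ n : ℕ, ∀ k ≤ ∑ i ∈ Finset.range (n + 1), ⌊(2 : ℝ) ^ i * α⌋₊,
      ∃ x ∈ FS (fun j => ⌊(2 : ℝ) ^ j * α⌋₊),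
      ∃ y ∈ FS (fun j => ⌊(2 : ℝ) ^ j * α⌋₊), k = x + y := by
  intro n k hk
  obtain ⟨I, -, J, -, hIJ⟩ :=
    exists_subset_sum_add_subset_sum (floor_two_pow_mul_le_two_mul_sum_add_one hα2) (n + 1)
      (hk.trans (Nat.le_mul_of_pos_left _ two_pos))
  exact ⟨_, ⟨I, rfl⟩, _, ⟨J, rfl⟩, hIJ⟩

/-- for every `n`, the integer interval `[0, s_n]` is contained
in `C₂ + C₂`, where `C₂ = FS({⌊2^n α⌋})`. -/
theorem interval_subset_C2_add_C2
    (α : ℝ) (hα1 : 1 < α) (hα2 : α < 2)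
    (ε : ℕ → ℕ) (hε : ∀ i, ε i ≤ 1) (hε0 : ε 0 = 1)
    (hsum : α = ∑' i, (ε i : ℝ) / 2 ^ i)
    (hinf : ∀ N : ℕ, ∃ i, N < i ∧ ε i ≠ 0) :
    ∀ n : ℕ, ∀ k ≤ ∑ i ∈ Finset.range (n + 1), ⌊(2 : ℝ) ^ i * α⌋₊,
      ∃ x ∈ FS (fun j => ⌊(2 : ℝ) ^ j * α⌋₊),
      ∃ y ∈ FS (fun j => ⌊(2 : ℝ) ^ j * α⌋₊), k = x + y :=
  interval_subset_C2_add_C2_general α hα2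
end

section
/- Let Z ⊆ {1, ..., N} with |Z| = m and consecutive-gap bound K (between consecutive elements of Z in increasing order). For any L, if every K-coloring of {1, ..., ⌊m/K⌋} admits a monochromatic arithmetic progression of length L, then Z contains an arithmetic progression of length L. -/
/-!
Cut `ℕ` into consecutive windows of length `K` starting at `z 1`. The gap bound forces each of the
first `⌊m/K⌋` windows to contain an element of `Z`; colour a window by the offset inside it of one
such element. A monochromatic progression of windows `a + j d` with common offset `r` then
yields the progression `z 1 + (a - 1) K + r + j (d K)` inside `Z`.
-/

def ContainsAP (Z : Set ℕ) (L : ℕ) : Prop :=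
  ∃ a d : ℕ, 1 ≤ d ∧ ∀ j < L, a + j * d ∈ Z

theorem containsAP_of_windows_meet (Z : Set ℕ) {K L n : ℕ} (b : ℕ) (hK : 0 < K)
    (hwin : ∀ i, 1 ≤ i → i ≤ n → ∃ r : Fin K, b + (i - 1) * K + r ∈ Z)
    (hvdW : ∀ c : ℕ → Fin K, ∃ a d : ℕ, 1 ≤ d ∧
      (∀ j < L, a + j * d ∈ Finset.Icc 1 n) ∧
      (∀ j < L, c (a + j * d) = c a)) :
    ContainsAP Z L := by
  have hoffset : ∀ i, ∃ r : Fin K, 1 ≤ i → i ≤ n → b + (i - 1) * K + r ∈ Z := by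
    intro i
    by_cases hi : 1 ≤ i ∧ i ≤ n
    · obtain ⟨r, hr⟩ := hwin i hi.1 hi.2
      exact ⟨r, fun _ _ => hr⟩
    · exact ⟨⟨0, hK⟩, fun h1 h2 => (hi ⟨h1, h2⟩).elim⟩
  choose c hc using hoffset
  obtain ⟨a, d, hd, hmem, hsame⟩ := hvdW c
  refine ⟨b + (a - 1) * K + c a, d * K, Nat.mul_pos hd hK, fun j hj => ?_⟩
  have ha : 1 ≤ a := by simpa using (Finset.mem_Icc.1 (hmem 0 (by omega))).1
  obtain ⟨hi1, hin⟩ := Finset.mem_Icc.1 (hmem j hj)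
  have hwindow := hc (a + j * d) hi1 hin
  rw [hsame j hj, show a + j * d - 1 = a - 1 + j * d by omega] at hwindow
  convert hwindow using 1
  ring

theorem exists_mem_window_of_gap_le {z : ℕ → ℕ} {m K t : ℕ} (hK : 0 < K)
    (hgap : ∀ i, 1 ≤ i → i < m → z (i + 1) - z i ≤ K) (hm : 1 ≤ m)
    (hlow : z 1 ≤ t) (hhigh : t ≤ z m) :
    ∃ j, 1 ≤ j ∧ j ≤ m ∧ t ≤ z j ∧ z j < t + K := by
  suffices ∀ n, 1 ≤ n → n ≤ m → t ≤ z n → ∃ j, 1 ≤ j ∧ j ≤ m ∧ t ≤ z j ∧ z j < t + K from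
    this m hm le_rfl hhigh
  intro n hn
  induction n, hn using Nat.le_induction with
  | base => exact fun hm ht => ⟨1, le_rfl, hm, ht, by omega⟩
  | succ n hn ih =>
    intro hnm ht
    by_cases htn : t ≤ z n
    · exact ih (by omega) htn
    · have := hgap n hn (by omega)
      exact ⟨n + 1, by omega, hnm, ht, by omega⟩

theorem add_sub_one_le_of_strictMono {z : ℕ → ℕ} {m : ℕ}
    (hmono : ∀ i, 1 ≤ i → i < m → z i < z (i + 1)) :
    ∀ j, 1 ≤ j → j ≤ m → z 1 + (j - 1) ≤ z j := by
  intro j hj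
  induction j, hj using Nat.le_induction with
  | base => simp
  | succ j hj ih =>
    intro hjm
    have := hmono j hj (by omega)
    have := ih (by omega)
    omega

theorem AP_in_bounded_gap_set_general
    (m K L : ℕ) (hK : 0 < K) (z : ℕ → ℕ)
    (hmono : ∀ i, 1 ≤ i → i < m → z i < z (i + 1))
    (hgap : ∀ i, 1 ≤ i → i < m → z (i + 1) - z i ≤ K)
    (hvdW : ∀ c : ℕ → Fin K, ∃ a d : ℕ, 1 ≤ d ∧
      (∀ j < L, a + j * d ∈ Finset.Icc 1 (m / K)) ∧
      (∀ j < L, c (a + j * d) = c a)) :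
    ∃ a d : ℕ, 1 ≤ d ∧ ∀ j < L, ∃ i, 1 ≤ i ∧ i ≤ m ∧ z i = a + j * d := by
  refine containsAP_of_windows_meet {x | ∃ i, 1 ≤ i ∧ i ≤ m ∧ z i = x} (z 1) hK
    (fun i hi hin => ?_) hvdW
  have hiK : i * K ≤ m := (Nat.le_div_iff_mul_le hK).1 hin
  have hiK' : (i - 1) * K = i * K - K := Nat.sub_one_mul i K
  have hm : 1 ≤ m := by nlinarith
  have hhigh : z 1 + (i - 1) * K ≤ z m :=
    (add_sub_one_le_of_strictMono hmono m hm le_rfl).trans' (by omega)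
  obtain ⟨j, hj1, hjm, hlow, hup⟩ :=
    exists_mem_window_of_gap_le hK hgap hm (Nat.le_add_right _ _) hhigh
  exact ⟨⟨z j - (z 1 + (i - 1) * K), by omega⟩, j, hj1, hjm, by rw [Fin.val_mk]; omega⟩

/-- if every `K`-coloring of `{1,...,⌊m/K⌋}` has a monochromatic
AP of length `L`, then a set `Z ⊆ {1,...,N}` of `m` elements with consecutive
gaps `≤ K` contains an AP of length `L`. -/
theorem AP_in_bounded_gap_set
    (N m K L : ℕ) (hK : 0 < K) (z : ℕ → ℕ)
    (hmono : ∀ i, 1 ≤ i → i < m → z i < z (i + 1))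
    (hrange : ∀ i, 1 ≤ i → i ≤ m → z i ∈ Finset.Icc 1 N)
    (hgap : ∀ i, 1 ≤ i → i < m → z (i + 1) - z i ≤ K)
    (hvdW : ∀ c : ℕ → Fin K, ∃ a d : ℕ, 1 ≤ d ∧
      (∀ j < L, a + j * d ∈ Finset.Icc 1 (m / K)) ∧
      (∀ j < L, c (a + j * d) = c a)) :
    ∃ a d : ℕ, 1 ≤ d ∧ ∀ j < L, ∃ i, 1 ≤ i ∧ i ≤ m ∧ z i = a + j * d :=
  AP_in_bounded_gap_set_general m K L hK z hmono hgap hvdW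
end

section
/- Let 1 < α < 2 with binary expansion having infinitely many nonzero digits and let C₂ = FS({⌊2^n α⌋}). Then the difference set C₂ − C₂ equals ℤ, i.e., every integer is a difference of two elements of C₂. -/
open Finset

section SignedSubsetSums

variable {X : ℕ → ℕ}

theorem le_two_mul_sum_range_add_one (h0 : X 0 ≤ 1) (hsucc : ∀ k, X (k + 1) ≤ 2 * X k + 1) :
    ∀ k, X k ≤ 2 * ∑ i ∈ range k, X i + 1
  | 0 => by simpa using h0
  | k + 1 => by
    have : X k ≤ ∑ i ∈ range (k + 1), X i := single_le_sum (by simp) (self_mem_range_succ k)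
    linarith [hsucc k]

/-- Greedy signed expansion: if `|z|` exceeds the partial sum `s` of the first `n` terms, then
subtracting `± X n` lands in `[-s, s]` exactly because `X n ≤ 2 s + 1`. -/
theorem exists_subset_range_eq_sub_of_abs_le (hX : ∀ k, X k ≤ 2 * ∑ i ∈ range k, X i + 1) :
    ∀ (n : ℕ) (z : ℤ), |z| ≤ ∑ i ∈ range n, (X i : ℤ) →
      ∃ I ⊆ range n, ∃ J ⊆ range n, z = ∑ i ∈ I, (X i : ℤ) - ∑ i ∈ J, (X i : ℤ)
  | 0, z, hz => ⟨∅, empty_subset _, ∅, empty_subset _, by simpa using hz⟩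
  | n + 1, z, hz => by
    have hmono := range_subset_range.2 n.le_succ
    set s := ∑ i ∈ range n, (X i : ℤ)
    have hXn : (X n : ℤ) ≤ 2 * s + 1 := by
      simp only [s]
      exact_mod_cast hX n
    rw [sum_range_succ] at hz
    have hn : n ∉ range n := by simp
    rcases le_or_gt |z| s with hzs | hzs
    · obtain ⟨I, hI, J, hJ, rfl⟩ := exists_subset_range_eq_sub_of_abs_le hX n z hzs
      exact ⟨I, hI.trans hmono, J, hJ.trans hmono, rfl⟩
    rcases le_or_gt 0 z with hz0 | hz0
    · rw [abs_of_nonneg hz0] at hz hzs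
      obtain ⟨I, hI, J, hJ, hIJ⟩ := exists_subset_range_eq_sub_of_abs_le hX n (z - X n)
        (abs_le.2 ⟨by linarith, by linarith⟩)
      refine ⟨insert n I, insert_subset (self_mem_range_succ n) (hI.trans hmono),
        J, hJ.trans hmono, ?_⟩
      rw [sum_insert fun h => hn (hI h)]
      linarith
    · rw [abs_of_neg hz0] at hz hzs
      obtain ⟨I, hI, J, hJ, hIJ⟩ := exists_subset_range_eq_sub_of_abs_le hX n (z + X n)
        (abs_le.2 ⟨by linarith, by linarith⟩)
      refine ⟨I, hI.trans hmono, insert n J,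
        insert_subset (self_mem_range_succ n) (hJ.trans hmono), ?_⟩
      rw [sum_insert fun h => hn (hJ h)]
      linarith

theorem exists_mem_FS_sub_eq (hpos : ∀ k, 0 < X k)
    (hX : ∀ k, X k ≤ 2 * ∑ i ∈ range k, X i + 1) (z : ℤ) :
    ∃ x ∈ FS X, ∃ y ∈ FS X, z = (x : ℤ) - (y : ℤ) := by
  have hz : |z| ≤ ∑ i ∈ range z.natAbs, (X i : ℤ) := by
    calc |z| = ∑ _i ∈ range z.natAbs, (1 : ℤ) := by simp
      _ ≤ _ := sum_le_sum fun i _ => by exact_mod_cast hpos i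
  obtain ⟨I, -, J, -, hIJ⟩ := exists_subset_range_eq_sub_of_abs_le hX _ z hz
  exact ⟨_, ⟨I, rfl⟩, _, ⟨J, rfl⟩, by push_cast; exact hIJ⟩

end SignedSubsetSums

theorem C2_sub_C2_eq_Z_general
    (α : ℝ) (hα1 : 1 < α) (hα2 : α < 2) :
    ∀ z : ℤ, ∃ x ∈ FS (fun k => ⌊(2 : ℝ) ^ k * α⌋₊),
      ∃ y ∈ FS (fun k => ⌊(2 : ℝ) ^ k * α⌋₊), z = (x : ℤ) - (y : ℤ) := by
  have hpos (k : ℕ) : 0 < ⌊(2 : ℝ) ^ k * α⌋₊ :=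
    Nat.floor_pos.2 (one_le_mul_of_one_le_of_one_le (one_le_pow₀ one_le_two) hα1.le)
  have h0 : ⌊(2 : ℝ) ^ 0 * α⌋₊ ≤ 1 := by
    rw [pow_zero, one_mul, ← Nat.lt_add_one_iff, Nat.floor_lt (by linarith)]
    norm_num [hα2]
  have hsucc (k : ℕ) : ⌊(2 : ℝ) ^ (k + 1) * α⌋₊ ≤ 2 * ⌊(2 : ℝ) ^ k * α⌋₊ + 1 := by
    rw [pow_succ', mul_assoc]
    exact Nat.floor_two_mul_le _
  exact exists_mem_FS_sub_eq hpos (le_two_mul_sum_range_add_one h0 hsucc)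

/-- `C₂ − C₂ = ℤ`: every integer is a difference of two elements
of `C₂ = FS({⌊2^n α⌋})`. -/
theorem C2_sub_C2_eq_Z
    (α : ℝ) (hα1 : 1 < α) (hα2 : α < 2)
    (ε : ℕ → ℕ) (hε : ∀ i, ε i ≤ 1) (hε0 : ε 0 = 1)
    (hsum : α = ∑' i, (ε i : ℝ) / 2 ^ i)
    (hinf : ∀ N : ℕ, ∃ i, N < i ∧ ε i ≠ 0) :
    ∀ z : ℤ, ∃ x ∈ FS (fun k => ⌊(2 : ℝ) ^ k * α⌋₊),
      ∃ y ∈ FS (fun k => ⌊(2 : ℝ) ^ k * α⌋₊), z = (x : ℤ) - (y : ℤ) :=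
  C2_sub_C2_eq_Z_general α hα1 hα2
end
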